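/- arXiv:1807.06999 — 3 statements merged into one kernel-verified Lean document; each statement's English description precedes it below -/
import Mathlib

section
/- If w is a weight on [0, r_max) that is bounded above and below (up to positive multiplicative constants) by a power series with nonnegative coefficients, and the integration operator J f(z) = ∫₀^z f(w) dw is bounded from H_w^∞ to H_u^∞, then there is a constant C > 0 such that ∫₀^r w(t) dt ≤ C u(r) for all 0 ≤ r < r_max. -/
open Complex MeasureTheory Real Set Filter
open scoped ENNReal Topology

noncomputable section

/-- The domain: disk of radius `rmax` (`rmax = 1` is the unit disk, `rmax = ⊤` is ℂ). -/
def Dom (rmax : ℝ≥0∞) : Set ℂ := {z : ℂ | ENNReal.ofReal ‖z‖ < rmax}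

/-- The integral mean `M_p(f, r)` for `0 < p < ∞`. -/
def Mp (p : ℝ) (f : ℂ → ℂ) (r : ℝ) : ℝ :=
  ((1 / (2 * π)) * ∫ θ in (0:ℝ)..(2 * π), ‖f ((r : ℂ) * Complex.exp ((θ : ℂ) * Complex.I))‖ ^ p)
    ^ (1 / p)

/-- The sup mean `M_∞(f, r)`. -/
def Minf (f : ℂ → ℂ) (r : ℝ) : ℝ :=
  ⨆ θ : ℝ, ‖f ((r : ℂ) * Complex.exp ((θ : ℂ) * Complex.I))‖

/-- A weight on `[0, rmax)`: positive, non-decreasing, continuous, unbounded. -/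
structure IsWeight (rmax : ℝ≥0∞) (w : ℝ → ℝ) : Prop where
  pos : ∀ r, 0 ≤ r → ENNReal.ofReal r < rmax → 0 < w r
  mono : ∀ r s, 0 ≤ r → r ≤ s → ENNReal.ofReal s < rmax → w r ≤ w s
  cont : ContinuousOn w {r : ℝ | 0 ≤ r ∧ ENNReal.ofReal r < rmax}
  unbdd : ∀ M : ℝ, ∃ r, 0 ≤ r ∧ ENNReal.ofReal r < rmax ∧ M < w r

/-- `log w(e^x)` is convex on the appropriate interval. -/
def LogConvexOn (rmax : ℝ≥0∞) (w : ℝ → ℝ) : Prop :=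
  ConvexOn ℝ {x : ℝ | ENNReal.ofReal (Real.exp x) < rmax}
    (fun x => Real.log (w (Real.exp x)))

/-- The integration operator `J f(z) = ∫₀^z f(ζ) dζ` (along the segment from 0 to z). -/
def Jop (f : ℂ → ℂ) (z : ℂ) : ℂ := ∫ t in (0:ℝ)..1, z * f ((t : ℂ) * z)

/-- The associated weight `w̃` (for `p = ∞`). -/
def assocInf (rmax : ℝ≥0∞) (w : ℝ → ℝ) (t : ℝ) : ℝ :=
  sSup {m : ℝ | ∃ f : ℂ → ℂ, DifferentiableOn ℂ f (Dom rmax) ∧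
    (∀ r, 0 ≤ r → ENNReal.ofReal r < rmax → Minf f r ≤ w r) ∧ m = Minf f t}

/-- The `p`-associated weight `w̃_p` for `0 < p < ∞`. -/
def assocP (rmax : ℝ≥0∞) (p : ℝ) (w : ℝ → ℝ) (t : ℝ) : ℝ :=
  sSup {m : ℝ | ∃ f : ℂ → ℂ, DifferentiableOn ℂ f (Dom rmax) ∧
    (∀ r, 0 ≤ r → ENNReal.ofReal r < rmax → Mp p f r ≤ w r) ∧ m = Mp p f t}

/-!
Test the boundedness of `J` on `f(z) = C₀⁻¹ ∑ aₖ zᵏ`. Since the coefficients are nonnegative,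
`|f(z)| ≤ C₀⁻¹ ∑ aₖ |z|ᵏ ≤ w(|z|)`, so `f` lies in the unit ball of `H_w^∞`; and on the positive
axis `J f(r) = C₀⁻¹ ∫₀^r ∑ aₖ tᵏ dt ≥ C₀⁻¹ ∫₀^r w`. Hence `∫₀^r w ≤ C₀ |J f(r)| ≤ C₀ B u(r)`.
-/

lemma norm_ofReal_mul_exp_mul_I {r : ℝ} (hr : 0 ≤ r) (θ : ℝ) :
    ‖(r : ℂ) * Complex.exp ((θ : ℂ) * Complex.I)‖ = r := by
  rw [norm_mul, Complex.norm_exp_ofReal_mul_I, mul_one, Complex.norm_of_nonneg hr]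

lemma Minf_le_of_norm_le {f : ℂ → ℂ} {r M : ℝ} (hr : 0 ≤ r)
    (h : ∀ z : ℂ, ‖z‖ = r → ‖f z‖ ≤ M) : Minf f r ≤ M :=
  ciSup_le fun θ => h _ (norm_ofReal_mul_exp_mul_I hr θ)

lemma norm_le_Minf_of_norm_le {f : ℂ → ℂ} {r M : ℝ} (hr : 0 ≤ r)
    (h : ∀ z : ℂ, ‖z‖ = r → ‖f z‖ ≤ M) : ‖f r‖ ≤ Minf f r := by
  have hbdd : BddAbove (range fun θ : ℝ => ‖f ((r : ℂ) * Complex.exp ((θ : ℂ) * Complex.I))‖) :=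
    ⟨M, forall_mem_range.2 fun θ => h _ (norm_ofReal_mul_exp_mul_I hr θ)⟩
  simpa [Minf] using le_ciSup hbdd 0

lemma Jop_ofReal {f : ℂ → ℂ} {g : ℝ → ℝ} (hfg : ∀ x : ℝ, f x = g x) (r : ℝ) :
    Jop f r = ((∫ t in (0 : ℝ)..r, g t : ℝ) : ℂ) := by
  have hJ : Jop f r = ∫ t in (0 : ℝ)..1, ((r * g (t * r) : ℝ) : ℂ) := by
    unfold Jop
    congr 1 with t
    rw [← Complex.ofReal_mul, hfg]
    push_cast
    ring
  rw [hJ, intervalIntegral.integral_ofReal, intervalIntegral.integral_const_mul,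
    ← smul_eq_mul, intervalIntegral.smul_integral_comp_mul_right, zero_mul, one_mul]

lemma norm_Jop_le {f : ℂ → ℂ} {z : ℂ} {M : ℝ} (h : ∀ ζ : ℂ, ‖ζ‖ ≤ ‖z‖ → ‖f ζ‖ ≤ M) :
    ‖Jop f z‖ ≤ ‖z‖ * M := by
  have hM : ∀ t ∈ uIoc (0 : ℝ) 1, ‖z * f (t * z)‖ ≤ ‖z‖ * M := by
    intro t ht
    rw [uIoc_of_le zero_le_one] at ht
    rw [norm_mul]
    refine mul_le_mul_of_nonneg_left (h _ ?_) (norm_nonneg z)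
    rw [norm_mul, Complex.norm_of_nonneg ht.1.le]
    exact mul_le_of_le_one_left (norm_nonneg z) ht.2
  simpa only [Jop, sub_zero, abs_one, mul_one] using
    intervalIntegral.norm_integral_le_of_norm_le_const hM

section PowerSeries

variable {a : ℕ → ℝ}

lemma norm_ofReal_mul_pow (ha : ∀ k, 0 ≤ a k) (z : ℂ) (k : ℕ) :
    ‖(a k : ℂ) * z ^ k‖ = a k * ‖z‖ ^ k := by
  rw [norm_mul, norm_pow, Complex.norm_of_nonneg (ha k)]

lemma norm_tsum_ofReal_mul_pow_le (ha : ∀ k, 0 ≤ a k) {z : ℂ}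
    (hs : Summable fun k => a k * ‖z‖ ^ k) :
    ‖∑' k, (a k : ℂ) * z ^ k‖ ≤ ∑' k, a k * ‖z‖ ^ k := by
  simp_rw [← norm_ofReal_mul_pow ha z] at hs ⊢
  exact norm_tsum_le_tsum_norm hs

lemma differentiableOn_ball_tsum_ofReal_mul_pow (ha : ∀ k, 0 ≤ a k) {ρ : ℝ}
    (hs : Summable fun k => a k * ρ ^ k) :
    DifferentiableOn ℂ (fun z : ℂ => ∑' k, (a k : ℂ) * z ^ k) (Metric.ball 0 ρ) := by
  refine differentiableOn_tsum_of_summable_norm hs (fun k => by fun_prop) Metric.isOpen_ball ?_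
  intro k z hz
  rw [norm_ofReal_mul_pow ha]
  have hzρ : ‖z‖ ≤ ρ := (mem_ball_zero_iff.1 hz).le
  gcongr
  exact ha k

lemma differentiableOn_Dom_tsum_ofReal_mul_pow (ha : ∀ k, 0 ≤ a k) {rmax : ℝ≥0∞}
    (hsum : ∀ r : ℝ, 0 ≤ r → ENNReal.ofReal r < rmax → Summable (fun k => a k * r ^ k)) :
    DifferentiableOn ℂ (fun z : ℂ => ∑' k, (a k : ℂ) * z ^ k) (Dom rmax) := by
  intro z hz
  obtain ⟨ρ, hρ, hzρ, hρmax⟩ := ENNReal.lt_iff_exists_real_btwn.1 hz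
  have hz_ball : z ∈ Metric.ball (0 : ℂ) ρ :=
    mem_ball_zero_iff.2 ((ENNReal.ofReal_lt_ofReal_iff_of_nonneg (norm_nonneg z)).1 hzρ)
  exact ((differentiableOn_ball_tsum_ofReal_mul_pow ha (hsum ρ hρ hρmax)).differentiableAt
    (Metric.isOpen_ball.mem_nhds hz_ball)).differentiableWithinAt

lemma tsum_ofReal_mul_ofReal_pow (x : ℝ) :
    ∑' k, (a k : ℂ) * (x : ℂ) ^ k = ((∑' k, a k * x ^ k : ℝ) : ℂ) := by
  push_cast [Complex.ofReal_tsum]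
  rfl

lemma monotoneOn_tsum_mul_pow (ha : ∀ k, 0 ≤ a k) {R : ℝ}
    (hsum : ∀ x ∈ Icc 0 R, Summable fun k => a k * x ^ k) :
    MonotoneOn (fun x : ℝ => ∑' k, a k * x ^ k) (Icc 0 R) := fun x hx y hy hxy =>
  (hsum x hx).tsum_le_tsum (fun k => by have := ha k; have := hx.1; gcongr) (hsum y hy)

end PowerSeries

section PowerSeriesWeight

variable {rmax : ℝ≥0∞} {w : ℝ → ℝ} {a : ℕ → ℝ}

lemma exists_differentiableOn_norm_le_Jop_ofReal_eq (ha : ∀ k, 0 ≤ a k)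
    (hsum : ∀ r : ℝ, 0 ≤ r → ENNReal.ofReal r < rmax → Summable (fun k => a k * r ^ k))
    {C₀ : ℝ} (hC₀ : 0 < C₀)
    (hle : ∀ r, 0 ≤ r → ENNReal.ofReal r < rmax → ∑' k, a k * r ^ k ≤ C₀ * w r) :
    ∃ f : ℂ → ℂ, DifferentiableOn ℂ f (Dom rmax) ∧ (∀ z ∈ Dom rmax, ‖f z‖ ≤ w ‖z‖) ∧
      ∀ r : ℝ, Jop f r = ((C₀⁻¹ * ∫ t in (0 : ℝ)..r, ∑' k, a k * t ^ k : ℝ) : ℂ) := by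
  refine ⟨fun z => (C₀⁻¹ : ℂ) * ∑' k, (a k : ℂ) * z ^ k,
    (differentiableOn_Dom_tsum_ofReal_mul_pow ha hsum).const_mul _, fun z hz => ?_, fun r => ?_⟩
  · rw [norm_mul, ← Complex.ofReal_inv, Complex.norm_of_nonneg (inv_nonneg.2 hC₀.le),
      inv_mul_le_iff₀ hC₀]
    exact (norm_tsum_ofReal_mul_pow_le ha (hsum _ (norm_nonneg z) hz)).trans
      (hle _ (norm_nonneg z) hz)
  · rw [← intervalIntegral.integral_const_mul]
    refine Jop_ofReal (fun x => ?_) r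
    rw [tsum_ofReal_mul_ofReal_pow]
    push_cast
    rfl

lemma integral_le_integral_tsum_mul_pow (ha : ∀ k, 0 ≤ a k)
    (hsum : ∀ r : ℝ, 0 ≤ r → ENNReal.ofReal r < rmax → Summable (fun k => a k * r ^ k))
    (hw : ContinuousOn w {r : ℝ | 0 ≤ r ∧ ENNReal.ofReal r < rmax})
    (hle : ∀ r, 0 ≤ r → ENNReal.ofReal r < rmax → w r ≤ ∑' k, a k * r ^ k)
    {r : ℝ} (hr : 0 ≤ r) (hrmax : ENNReal.ofReal r < rmax) :
    ∫ t in (0 : ℝ)..r, w t ≤ ∫ t in (0 : ℝ)..r, ∑' k, a k * t ^ k := by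
  have hlt : ∀ x ∈ Icc 0 r, ENNReal.ofReal x < rmax := fun x hx =>
    (ENNReal.ofReal_le_ofReal hx.2).trans_lt hrmax
  refine intervalIntegral.integral_mono_on hr ?_ ?_ fun x hx => hle x hx.1 (hlt x hx)
  · exact ContinuousOn.intervalIntegrable_of_Icc hr (hw.mono fun x hx => ⟨hx.1, hlt x hx⟩)
  · refine MonotoneOn.intervalIntegrable ?_
    rw [uIcc_of_le hr]
    exact monotoneOn_tsum_mul_pow ha fun x hx => hsum x hx.1 (hlt x hx)

end PowerSeriesWeight

theorem stmt_0_general (rmax : ℝ≥0∞)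
    (w u : ℝ → ℝ) (hw : IsWeight rmax w) (hu : IsWeight rmax u)
    (a : ℕ → ℝ) (ha : ∀ k, 0 ≤ a k)
    (hsum : ∀ r : ℝ, 0 ≤ r → ENNReal.ofReal r < rmax → Summable (fun k => a k * r ^ k))
    (C₀ : ℝ) (hC₀ : 0 < C₀)
    (hequiv : ∀ r, 0 ≤ r → ENNReal.ofReal r < rmax →
      w r ≤ ∑' k : ℕ, a k * r ^ k ∧ (∑' k : ℕ, a k * r ^ k) ≤ C₀ * w r)
    (B : ℝ)
    (hbdd : ∀ f : ℂ → ℂ, DifferentiableOn ℂ f (Dom rmax) →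
      (∀ r, 0 ≤ r → ENNReal.ofReal r < rmax → Minf f r ≤ w r) →
      ∀ r, 0 ≤ r → ENNReal.ofReal r < rmax → Minf (Jop f) r ≤ B * u r) :
    ∃ C > 0, ∀ r, 0 ≤ r → ENNReal.ofReal r < rmax →
      (∫ t in (0:ℝ)..r, w t) ≤ C * u r := by
  obtain ⟨f, hf_diff, hf_le, hJf⟩ := exists_differentiableOn_norm_le_Jop_ofReal_eq ha hsum hC₀
    fun r hr hrmax => (hequiv r hr hrmax).2
  have hf_Minf : ∀ r, 0 ≤ r → ENNReal.ofReal r < rmax → Minf f r ≤ w r :=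
    fun r hr hrmax => Minf_le_of_norm_le hr fun z hz => by
      rw [← hz] at hrmax ⊢
      exact hf_le z hrmax
  refine ⟨max (C₀ * B) 1, by positivity, fun r hr hrmax => ?_⟩
  have hJf_circle : ∀ z : ℂ, ‖z‖ = r → ‖Jop f z‖ ≤ r * w r := fun z hz => by
    rw [← hz] at hrmax ⊢
    refine norm_Jop_le fun ζ hζ => (hf_le ζ ?_).trans (hw.mono _ _ (norm_nonneg ζ) hζ hrmax)
    exact (ENNReal.ofReal_le_ofReal hζ).trans_lt hrmax
  calc ∫ t in (0 : ℝ)..r, w t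
      ≤ ∫ t in (0 : ℝ)..r, ∑' k, a k * t ^ k :=
        integral_le_integral_tsum_mul_pow ha hsum hw.cont (fun r hr hrmax => (hequiv r hr hrmax).1)
          hr hrmax
    _ ≤ C₀ * ‖Jop f r‖ := by
        rw [hJf, Complex.norm_real, Real.norm_eq_abs, ← inv_mul_le_iff₀ hC₀]
        exact le_abs_self _
    _ ≤ C₀ * Minf (Jop f) r := by gcongr; exact norm_le_Minf_of_norm_le hr hJf_circle
    _ ≤ C₀ * (B * u r) := by gcongr; exact hbdd f hf_diff hf_Minf r hr hrmax
    _ ≤ max (C₀ * B) 1 * u r := by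
        rw [← mul_assoc]
        exact mul_le_mul_of_nonneg_right (le_max_left _ _) (hu.pos r hr hrmax).le

/-- if `w` is equivalent to a power series with nonnegative coefficients and
`J : H_w^∞ → H_u^∞` is bounded, then `∫₀^r w ≤ C u(r)`. -/
theorem stmt_0 (rmax : ℝ≥0∞) (hrmax : rmax = 1 ∨ rmax = ⊤)
    (w u : ℝ → ℝ) (hw : IsWeight rmax w) (hu : IsWeight rmax u)
    (a : ℕ → ℝ) (ha : ∀ k, 0 ≤ a k)
    (hsum : ∀ r : ℝ, 0 ≤ r → ENNReal.ofReal r < rmax → Summable (fun k => a k * r ^ k))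
    (C₀ : ℝ) (hC₀ : 0 < C₀)
    (hequiv : ∀ r, 0 ≤ r → ENNReal.ofReal r < rmax →
      w r ≤ ∑' k : ℕ, a k * r ^ k ∧ (∑' k : ℕ, a k * r ^ k) ≤ C₀ * w r)
    (B : ℝ)
    (hbdd : ∀ f : ℂ → ℂ, DifferentiableOn ℂ f (Dom rmax) →
      (∀ r, 0 ≤ r → ENNReal.ofReal r < rmax → Minf f r ≤ w r) →
      ∀ r, 0 ≤ r → ENNReal.ofReal r < rmax → Minf (Jop f) r ≤ B * u r) :
    ∃ C > 0, ∀ r, 0 ≤ r → ENNReal.ofReal r < rmax →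
      (∫ t in (0:ℝ)..r, w t) ≤ C * u r :=
  stmt_0_general rmax w u hw hu a ha hsum C₀ hC₀ hequiv B hbdd
end
end

section
/- Let 0 < p < ∞ and let w be a log-convex weight on [0,1). Then there is C > 0 such that w̃_p(r) ≤ w(r) ≤ C w̃_p(r) for all 0 ≤ r < 1; that is, every log-convex weight on [0,1) is equivalent to its p-associated weight. -/
open Complex MeasureTheory Real Set Filter
open scoped ENNReal Topology

noncomputable section

/-!
On the unit disk the `p`-mean of a monomial is `M_p(c zⁿ, r) = |c| rⁿ`, so it suffices to fit, for
each `t`, a monomial under `w` that is comparable to `w` at `t`. Writing `φ(x) = log w(eˣ)`, which is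
convex and non-decreasing on `(-∞, 0)`, a supporting line of `φ` at `log t` has slope `D ≥ 0`; its
slope rounded up to the integer `n = ⌊D⌋ + 1` still lies below `φ` up to the additive error
`-log t`, which yields `t w(t) (r/t)ⁿ ≤ w(r)`. Thus `w̃_p(t) ≥ t w(t)`, which handles `t ≥ 1/2`;
for small `t` the constant `w(0)` already gives `w̃_p(t) ≥ w(0)`.
-/

namespace ConvexOn

variable {S : Set ℝ} {f : ℝ → ℝ} {x y : ℝ}

lemma add_rightDeriv_mul_sub_le (hf : ConvexOn ℝ S f) (hx : x ∈ interior S) (hy : y ∈ S) :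
    f x + derivWithin f (Ioi x) x * (y - x) ≤ f y := by
  rcases lt_trichotomy y x with hyx | rfl | hxy
  · have h := (hf.slope_le_leftDeriv_of_mem_interior hy hx hyx).trans
      (hf.leftDeriv_le_rightDeriv_of_mem_interior hx)
    rw [slope_def_field, div_le_iff₀ (sub_pos.2 hyx)] at h
    linarith
  · simp
  · have h := hf.rightDeriv_le_slope_of_mem_interior hx hy hxy
    rw [slope_def_field, le_div_iff₀ (sub_pos.2 hxy)] at h
    linarith

lemma rightDeriv_nonneg_of_monotoneOn (hf : ConvexOn ℝ S f) (hmono : MonotoneOn f S)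
    (hx : x ∈ interior S) : 0 ≤ derivWithin f (Ioi x) x := by
  refine le_trans ?_ (hf.leftDeriv_le_rightDeriv_of_mem_interior hx)
  rw [← derivWithin_inter (mem_interior_iff_mem_nhds.1 hx)]
  exact (hmono.mono inter_subset_right).derivWithin_nonneg

lemma exists_nat_mul_sub_le_add {a : ℝ} (hf : ConvexOn ℝ (Iio a) f)
    (hmono : MonotoneOn f (Iio a)) (hx : x < a) :
    ∃ n : ℕ, 0 < n ∧ ∀ y < a, f x + n * (y - x) ≤ f y + (a - x) := by
  have hxi : x ∈ interior (Iio a) := by rwa [interior_Iio]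
  set D := derivWithin f (Ioi x) x
  have hD : 0 ≤ D := hf.rightDeriv_nonneg_of_monotoneOn hmono hxi
  refine ⟨⌊D⌋₊ + 1, Nat.succ_pos _, fun y hy => ?_⟩
  have hsupport := hf.add_rightDeriv_mul_sub_le hxi hy
  have hnD : D ≤ ⌊D⌋₊ + 1 := (Nat.lt_floor_add_one D).le
  have hDn : (⌊D⌋₊ : ℝ) ≤ D := Nat.floor_le hD
  push_cast
  rcases le_or_gt x y with hxy | hyx
  · nlinarith [mul_le_mul_of_nonneg_right (by linarith : (⌊D⌋₊ + 1 : ℝ) - D ≤ 1)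
      (sub_nonneg.2 hxy)]
  · nlinarith [mul_nonpos_of_nonneg_of_nonpos (by linarith : (0 : ℝ) ≤ ⌊D⌋₊ + 1 - D)
      (sub_nonpos.2 hyx.le)]

end ConvexOn

lemma Mp_const_mul_pow {p : ℝ} (hp : p ≠ 0) (c : ℂ) (n : ℕ) {r : ℝ} (hr : 0 ≤ r) :
    Mp p (fun z => c * z ^ n) r = ‖c‖ * r ^ n := by
  have hnorm (θ : ℝ) : ‖c * ((r : ℂ) * exp ((θ : ℂ) * I)) ^ n‖ = ‖c‖ * r ^ n := by
    simp [norm_exp_ofReal_mul_I, abs_of_nonneg hr]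
  simp only [Mp, hnorm, intervalIntegral.integral_const, smul_eq_mul, sub_zero]
  rw [← mul_assoc, one_div_mul_cancel (by positivity), one_mul, ← rpow_mul (by positivity),
    mul_one_div_cancel hp, rpow_one]

section AssociatedWeight

variable {rmax : ℝ≥0∞} {p : ℝ} {w : ℝ → ℝ} {t : ℝ}

lemma assocP_le (ht0 : 0 ≤ t) (ht : ENNReal.ofReal t < rmax)
    (hne : ∃ f : ℂ → ℂ, DifferentiableOn ℂ f (Dom rmax) ∧
      ∀ r, 0 ≤ r → ENNReal.ofReal r < rmax → Mp p f r ≤ w r) :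
    assocP rmax p w t ≤ w t := by
  obtain ⟨f, hf, hfw⟩ := hne
  refine csSup_le ⟨_, f, hf, hfw, rfl⟩ ?_
  rintro _ ⟨g, -, hgw, rfl⟩
  exact hgw t ht0 ht

lemma Mp_le_assocP {f : ℂ → ℂ} (ht0 : 0 ≤ t) (ht : ENNReal.ofReal t < rmax)
    (hf : DifferentiableOn ℂ f (Dom rmax))
    (hfw : ∀ r, 0 ≤ r → ENNReal.ofReal r < rmax → Mp p f r ≤ w r) :
    Mp p f t ≤ assocP rmax p w t := by
  refine le_csSup ⟨w t, ?_⟩ ⟨f, hf, hfw, rfl⟩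
  rintro _ ⟨g, -, hgw, rfl⟩
  exact hgw t ht0 ht

lemma const_mul_pow_le_assocP (hp : p ≠ 0) {c : ℝ} (hc : 0 ≤ c) (n : ℕ) (ht0 : 0 ≤ t)
    (ht : ENNReal.ofReal t < rmax) (hcw : ∀ r, 0 ≤ r → ENNReal.ofReal r < rmax → c * r ^ n ≤ w r) :
    c * t ^ n ≤ assocP rmax p w t := by
  have hMp {r : ℝ} (hr : 0 ≤ r) : Mp p (fun z => (c : ℂ) * z ^ n) r = c * r ^ n := by
    rw [Mp_const_mul_pow hp _ n hr, norm_real, norm_of_nonneg hc]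
  rw [← hMp ht0]
  refine Mp_le_assocP ht0 ht (by fun_prop) fun r hr hrmax => ?_
  rw [hMp hr]
  exact hcw r hr hrmax

end AssociatedWeight

section UnitDisk

variable {p : ℝ} {w : ℝ → ℝ} {t : ℝ}

lemma LogConvexOn.convexOn_Iio (hlc : LogConvexOn 1 w) :
    ConvexOn ℝ (Iio 0) (fun x => Real.log (w (Real.exp x))) := by
  have hset : {x : ℝ | ENNReal.ofReal (Real.exp x) < 1} = Iio 0 := by
    ext x
    simp [ENNReal.ofReal_lt_one]
  rw [LogConvexOn, hset] at hlc
  exact hlc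

namespace IsWeight

lemma pos_of_lt_one (hw : IsWeight 1 w) {r : ℝ} (hr0 : 0 ≤ r) (hr1 : r < 1) : 0 < w r :=
  hw.pos r hr0 (ENNReal.ofReal_lt_one.2 hr1)

lemma mono_of_lt_one (hw : IsWeight 1 w) {r s : ℝ} (hr0 : 0 ≤ r) (hrs : r ≤ s) (hs1 : s < 1) :
    w r ≤ w s :=
  hw.mono r s hr0 hrs (ENNReal.ofReal_lt_one.2 hs1)

lemma monotoneOn_log_comp_exp (hw : IsWeight 1 w) :
    MonotoneOn (fun x => Real.log (w (Real.exp x))) (Iio 0) := fun _ _ _ hy hxy =>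
  log_le_log (hw.pos_of_lt_one (Real.exp_pos _).le (Real.exp_lt_one_iff.2 (hxy.trans_lt hy)))
    (hw.mono_of_lt_one (Real.exp_pos _).le (Real.exp_le_exp.2 hxy) (Real.exp_lt_one_iff.2 hy))

lemma exists_mul_pow_le (hw : IsWeight 1 w) (hlc : LogConvexOn 1 w) (ht0 : 0 < t) (ht1 : t < 1) :
    ∃ n : ℕ, 0 < n ∧ ∀ r, 0 < r → r < 1 → t * w t * r ^ n ≤ w r * t ^ n := by
  obtain ⟨n, hn, hsub⟩ :=
    hlc.convexOn_Iio.exists_nat_mul_sub_le_add hw.monotoneOn_log_comp_exp (log_neg ht0 ht1)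
  refine ⟨n, hn, fun r hr0 hr1 => ?_⟩
  have hlog := hsub (Real.log r) (log_neg hr0 hr1)
  simp only [Real.exp_log ht0, Real.exp_log hr0] at hlog
  have hwt := hw.pos_of_lt_one ht0.le ht1
  have hwr := hw.pos_of_lt_one hr0.le hr1
  rw [← log_le_log_iff (by positivity) (by positivity), log_mul (by positivity) (by positivity),
    log_mul ht0.ne' hwt.ne', log_mul hwr.ne' (by positivity), log_pow, log_pow]
  linarith

lemma w_zero_le_assocP (hw : IsWeight 1 w) (hp : p ≠ 0) (ht0 : 0 ≤ t) (ht1 : t < 1) :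
    w 0 ≤ assocP 1 p w t := by
  simpa using const_mul_pow_le_assocP hp (hw.pos_of_lt_one le_rfl one_pos).le 0 ht0
    (ENNReal.ofReal_lt_one.2 ht1) fun r hr hr1 => by
      simpa using hw.mono_of_lt_one le_rfl hr (ENNReal.ofReal_lt_one.1 hr1)

lemma mul_le_assocP (hw : IsWeight 1 w) (hlc : LogConvexOn 1 w) (hp : p ≠ 0) (ht0 : 0 < t)
    (ht1 : t < 1) : t * w t ≤ assocP 1 p w t := by
  obtain ⟨n, hn, hle⟩ := hw.exists_mul_pow_le hlc ht0 ht1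
  have htn : 0 < t ^ n := pow_pos ht0 n
  have hc : t * w t / t ^ n * t ^ n = t * w t := div_mul_cancel₀ _ htn.ne'
  rw [← hc]
  refine const_mul_pow_le_assocP hp (by positivity [hw.pos_of_lt_one ht0.le ht1]) n ht0.le
    (ENNReal.ofReal_lt_one.2 ht1) fun r hr hr1 => ?_
  rcases hr.eq_or_lt with rfl | hr0
  · simpa [zero_pow hn.ne'] using (hw.pos_of_lt_one le_rfl one_pos).le
  · rw [div_mul_eq_mul_div, div_le_iff₀ htn]
    exact hle r hr0 (ENNReal.ofReal_lt_one.1 hr1)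

end IsWeight

end UnitDisk

/-- a log-convex weight on `[0,1)` is equivalent to its `p`-associated weight. -/
theorem stmt_6 (p : ℝ) (hp : 0 < p) (w : ℝ → ℝ)
    (hw : IsWeight 1 w) (hlc : LogConvexOn 1 w) :
    ∃ C > 0, ∀ r : ℝ, 0 ≤ r → r < 1 →
      assocP 1 p w r ≤ w r ∧ w r ≤ C * assocP 1 p w r := by
  have hw0 : 0 < w 0 := hw.pos_of_lt_one le_rfl one_pos
  refine ⟨max 2 (w (1 / 2) / w 0), lt_max_of_lt_left two_pos, fun t ht0 ht1 => ⟨?_, ?_⟩⟩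
  · refine assocP_le ht0 (ENNReal.ofReal_lt_one.2 ht1)
      ⟨fun z => (w 0 : ℂ) * z ^ 0, by fun_prop, fun r hr hr1 => ?_⟩
    rw [Mp_const_mul_pow hp.ne' _ 0 hr, norm_real, norm_of_nonneg hw0.le, pow_zero, mul_one]
    exact hw.mono_of_lt_one le_rfl hr (ENNReal.ofReal_lt_one.1 hr1)
  · rcases lt_or_ge t (1 / 2) with ht | ht
    · calc w t ≤ w (1 / 2) := hw.mono_of_lt_one ht0 ht.le (by norm_num)
        _ = w (1 / 2) / w 0 * w 0 := (div_mul_cancel₀ _ hw0.ne').symm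
        _ ≤ max 2 (w (1 / 2) / w 0) * assocP 1 p w t :=
          mul_le_mul (le_max_right _ _) (hw.w_zero_le_assocP hp.ne' ht0 ht1) hw0.le
            (zero_le_two.trans (le_max_left _ _))
    · have htpos : 0 < t := by linarith
      have hwt := hw.pos_of_lt_one ht0 ht1
      calc w t ≤ 2 * (t * w t) := by nlinarith
        _ ≤ max 2 (w (1 / 2) / w 0) * assocP 1 p w t :=
          mul_le_mul (le_max_left _ _) (hw.mul_le_assocP hlc hp.ne' htpos ht1)
            (by positivity) (zero_le_two.trans (le_max_left _ _))
end
end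

section
/- Let w, u be weights on [0, ∞) with w(1+r) ≤ C u(r) for all r ≥ 0. Then differentiation is bounded from H_w^p(ℂ) to H_u^p(ℂ) for every 0 < p < ∞. -/
/-!
For holomorphic `f` and every `p > 0`, `‖f z‖ ^ p` is bounded by a constant times the mean of
`‖f‖ ^ p` over any disc around `z`: by Jensen's inequality when `p ≥ 1`, and for `p < 1` by the
Hardy–Littlewood trick of maximising `(R - |v - z|) ^ (2 / p) * ‖f v‖` over the disc, which turns
the sub-mean-value property of `‖f‖` into one of `‖f‖ ^ p`. With the Cauchy estimate this bounds
`‖f' z‖ ^ p` by the integral of `‖f‖ ^ p` over the unit disc around `z`. Averaging over `|z| = r`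
and rotating each of these discs onto the one centred at `r` turns the right-hand side into an
average of `M_p(f, t) ^ p` over radii `t ≤ r + 1`, so `M_p(f', r) ≲ w(1 + r) ≤ C u(r)`.
-/

open Complex MeasureTheory Real Set Filter
open scoped ENNReal Topology

noncomputable section

open Metric

namespace HardyWeighted

section Rotation

variable {E : Type*} [NormedAddCommGroup E] [NormedSpace ℝ E]

theorem setIntegral_closedBall_comp_add_exp_mul (g : ℂ → E) (c : ℂ) (θ ρ : ℝ) :
    ∫ z in closedBall 0 ρ, g (c + cexp (θ * I) * z) = ∫ z in closedBall c ρ, g z := by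
  let e : ℂ ≃ₜ ℂ := (rotation (Circle.exp θ)).toHomeomorph.trans (Homeomorph.addLeft c)
  have he : MeasurePreserving e :=
    (measurePreserving_add_left volume c).comp (rotation (Circle.exp θ)).measurePreserving
  have hpre : e ⁻¹' closedBall c ρ = closedBall 0 ρ := by
    ext z
    simp [e, dist_eq_norm]
  rw [← hpre]
  exact he.setIntegral_preimage_emb e.measurableEmbedding g _

theorem continuous_setIntegral_closedBall {g : ℂ → E} (hg : Continuous g) (ρ : ℝ) :
    Continuous fun z => ∫ ζ in closedBall z ρ, g ζ := by
  simp_rw [← setIntegral_closedBall_comp_add_exp_mul g _ 0 ρ, ofReal_zero, zero_mul,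
    Complex.exp_zero, one_mul]
  exact continuous_parametric_integral_of_continuous (by fun_prop) (isCompact_closedBall 0 ρ)

theorem circleAverage_eq_integral_exp_mul (g : ℂ → E) (a : ℂ) :
    circleAverage g 0 ‖a‖ = (2 * π)⁻¹ • ∫ θ in 0..2 * π, g (cexp (θ * I) * a) := by
  rw [circleAverage_eq_integral_add (arg a)]
  congr with θ
  rw [circleMap_zero]
  conv_rhs => rw [← norm_mul_exp_arg_mul_I a]
  push_cast
  rw [add_mul, Complex.exp_add]
  ring_nf

/-- Rotate each disc `closedBall (r * exp (θ * I)) ρ` onto `closedBall r ρ`, then apply Fubini. -/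
theorem circleAverage_setIntegral_closedBall {g : ℂ → E} (hg : Continuous g) (r ρ : ℝ) :
    circleAverage (fun z => ∫ ζ in closedBall z ρ, g ζ) 0 r =
      ∫ ζ in closedBall 0 ρ, circleAverage g 0 ‖(r : ℂ) + ζ‖ := by
  have hrot : ∀ θ : ℝ, ∫ ζ in closedBall (circleMap 0 r θ) ρ, g ζ =
      ∫ ζ in closedBall 0 ρ, g (cexp (θ * I) * (r + ζ)) := fun θ => by
    rw [← setIntegral_closedBall_comp_add_exp_mul g _ θ, circleMap_zero]
    simp only [mul_comm (cexp _), add_mul]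
  have hint : Integrable (Function.uncurry fun (θ : ℝ) (ζ : ℂ) => g (cexp (θ * I) * (r + ζ)))
      ((volume.restrict (uIoc 0 (2 * π))).prod (volume.restrict (closedBall 0 ρ))) := by
    rw [Measure.prod_restrict, ← Measure.volume_eq_prod]
    refine (ContinuousOn.integrableOn_compact (isCompact_uIcc.prod (isCompact_closedBall 0 ρ))
      ?_).mono_set (prod_mono uIoc_subset_uIcc subset_rfl)
    exact (hg.comp (by fun_prop)).continuousOn
  simp_rw [circleAverage_eq_integral_exp_mul, circleAverage_def, hrot]
  rw [intervalIntegral_integral_swap hint, integral_smul]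

end Rotation

theorem volume_real_closedBall (c : ℂ) {ρ : ℝ} (hρ : 0 ≤ ρ) :
    volume.real (closedBall c ρ) = π * ρ ^ 2 := by
  simp [measureReal_def, ENNReal.toReal_ofReal hρ, mul_comm]

theorem le_rpow_one_sub_mul_rpow {x M p : ℝ} (hx : 0 ≤ x) (hxM : x ≤ M) (hp1 : p ≤ 1) :
    x ≤ M ^ (1 - p) * x ^ p :=
  calc x = x ^ (1 - p) * x ^ p := by rw [← rpow_add' hx (by norm_num), sub_add_cancel, rpow_one]
    _ ≤ M ^ (1 - p) * x ^ p := by gcongr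

theorem rpow_le_of_le_mul_rpow_one_sub {x c p : ℝ} (hx : 0 ≤ x) (hc : 0 ≤ c) (hp : 0 < p)
    (h : x ≤ c * x ^ (1 - p)) : x ^ p ≤ c := by
  rcases hx.eq_or_lt with rfl | hx
  · rwa [zero_rpow hp.ne']
  have hsplit : x = x ^ p * x ^ (1 - p) := by
    rw [← rpow_add hx, add_sub_cancel, rpow_one]
  nth_rewrite 1 [hsplit] at h
  exact le_of_mul_le_mul_right h (by positivity)

theorem integrableOn_closedBall_norm_rpow {G : Type*} [NormedAddCommGroup G] {g : ℂ → G}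
    (hg : Continuous g) {p : ℝ} (hp : 0 ≤ p) (c : ℂ) (ρ : ℝ) :
    IntegrableOn (fun z => ‖g z‖ ^ p) (closedBall c ρ) :=
  (hg.norm.rpow_const fun _ => Or.inr hp).locallyIntegrable.integrableOn_isCompact
    (isCompact_closedBall c ρ)

section Holomorphic

variable {F : Type*} [NormedAddCommGroup F] [NormedSpace ℂ F] [CompleteSpace F] {f : ℂ → F}
  {p : ℝ}

theorem _root_.Differentiable.setIntegral_closedBall (hf : Differentiable ℂ f) (c : ℂ) {ρ : ℝ}
    (hρ : 0 ≤ ρ) : ∫ z in closedBall c ρ, f z = (π * ρ ^ 2) • f c := by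
  have key := circleAverage_setIntegral_closedBall (g := fun z => f (z + c))
    (hf.continuous.comp (continuous_add_const c)) 0 ρ
  simp only [circleAverage_zero, ofReal_zero, zero_add, circleAverage_map_add_const,
    hf.diffContOnCl.circleAverage, setIntegral_const, volume_real_closedBall 0 hρ] at key
  rw [← key, ← setIntegral_closedBall_comp_add_exp_mul _ c 0 ρ]
  simp [add_comm]

theorem norm_le_setIntegral_closedBall (hf : Differentiable ℂ f) (c : ℂ) {ρ : ℝ} (hρ : 0 < ρ) :
    ‖f c‖ ≤ (π * ρ ^ 2)⁻¹ * ∫ z in closedBall c ρ, ‖f z‖ := by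
  have hpos : 0 < π * ρ ^ 2 := by positivity
  rw [le_inv_mul_iff₀ hpos, ← abs_of_pos hpos, ← Real.norm_eq_abs, ← norm_smul,
    ← hf.setIntegral_closedBall c hρ.le]
  exact norm_integral_le_integral_norm _

theorem norm_le_mul_setIntegral_rpow (hf : Differentiable ℂ f) (hp : 0 < p) (hp1 : p ≤ 1)
    {w : ℂ} {ρ M : ℝ} (hρ : 0 < ρ) (hM : ∀ v ∈ closedBall w ρ, ‖f v‖ ≤ M) :
    ‖f w‖ ≤ (π * ρ ^ 2)⁻¹ * M ^ (1 - p) * ∫ v in closedBall w ρ, ‖f v‖ ^ p := by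
  calc ‖f w‖ ≤ (π * ρ ^ 2)⁻¹ * ∫ v in closedBall w ρ, ‖f v‖ :=
        norm_le_setIntegral_closedBall hf w hρ
    _ ≤ (π * ρ ^ 2)⁻¹ * ∫ v in closedBall w ρ, M ^ (1 - p) * ‖f v‖ ^ p := by
        refine mul_le_mul_of_nonneg_left (setIntegral_mono_on ?_ ?_ measurableSet_closedBall
          fun v hv => le_rpow_one_sub_mul_rpow (norm_nonneg _) (hM v hv) hp1) (by positivity)
        · simpa using integrableOn_closedBall_norm_rpow hf.continuous zero_le_one w ρ
        · exact (integrableOn_closedBall_norm_rpow hf.continuous hp.le w ρ).const_mul _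
    _ = (π * ρ ^ 2)⁻¹ * M ^ (1 - p) * ∫ v in closedBall w ρ, ‖f v‖ ^ p := by
        rw [integral_const_mul, mul_assoc]

theorem sub_dist_rpow_mul_norm_le (hf : Differentiable ℂ f) (hp : 0 < p) (hp1 : p ≤ 1)
    {z : ℂ} {R Φ : ℝ} (hΦ : ∀ v ∈ closedBall z R, (R - dist v z) ^ (2 / p) * ‖f v‖ ≤ Φ) {w : ℂ}
    (hw : w ∈ closedBall z R) :
    (R - dist w z) ^ (2 / p) * ‖f w‖ ≤
      2 ^ (2 / p) / π * Φ ^ (1 - p) * ∫ v in closedBall z R, ‖f v‖ ^ p := by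
  set I := ∫ v in closedBall z R, ‖f v‖ ^ p
  have hd : 0 ≤ R - dist w z := by rw [mem_closedBall] at hw; linarith
  have hΦ0 : 0 ≤ Φ := (by positivity : 0 ≤ (R - dist w z) ^ (2 / p) * ‖f w‖).trans (hΦ w hw)
  rcases hd.eq_or_lt with hd0 | hdpos
  · rw [← hd0, zero_rpow (by positivity), zero_mul]
    positivity
  set ρ := (R - dist w z) / 2
  have hρ : 0 < ρ := by positivity
  have hdρ : R - dist w z = 2 * ρ := by ring
  have hsub : closedBall w ρ ⊆ closedBall z R := closedBall_subset_closedBall' (by linarith)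
  have hbound : ∀ v ∈ closedBall w ρ, ‖f v‖ ≤ Φ / ρ ^ (2 / p) := by
    intro v hv
    have hρv : ρ ≤ R - dist v z := by
      rw [mem_closedBall] at hv
      linarith [dist_triangle v w z]
    rw [le_div_iff₀ (by positivity), mul_comm]
    exact (mul_le_mul_of_nonneg_right (rpow_le_rpow hρ.le hρv (by positivity))
      (norm_nonneg _)).trans (hΦ v (hsub hv))
  have hmono : ∫ v in closedBall w ρ, ‖f v‖ ^ p ≤ I :=
    setIntegral_mono_set (integrableOn_closedBall_norm_rpow hf.continuous hp.le _ _)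
      (Eventually.of_forall fun _ => by positivity) hsub.eventuallyLE
  -- the exponent `2 / p` is chosen so that the powers of `ρ` cancel
  have hsplit : ρ ^ (2 / p) = ρ ^ (2 / p * (1 - p)) * ρ ^ 2 := by
    rw [← rpow_two, ← rpow_add hρ]
    congr 1
    field_simp
    ring
  calc (R - dist w z) ^ (2 / p) * ‖f w‖ = (2 * ρ) ^ (2 / p) * ‖f w‖ := by rw [hdρ]
    _ ≤ (2 * ρ) ^ (2 / p) * ((π * ρ ^ 2)⁻¹ * (Φ / ρ ^ (2 / p)) ^ (1 - p) * I) := by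
        gcongr
        exact (norm_le_mul_setIntegral_rpow hf hp hp1 hρ hbound).trans (by gcongr)
    _ = 2 ^ (2 / p) / π * Φ ^ (1 - p) * I := by
        rw [mul_rpow zero_le_two hρ.le, div_rpow hΦ0 (by positivity), ← rpow_mul hρ.le, hsplit]
        field_simp

theorem norm_rpow_le_of_le_one (hf : Differentiable ℂ f) (hp : 0 < p) (hp1 : p ≤ 1) (z : ℂ)
    {R : ℝ} (hR : 0 < R) :
    ‖f z‖ ^ p ≤ 2 ^ (2 / p) / (π * R ^ 2) * ∫ w in closedBall z R, ‖f w‖ ^ p := by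
  set φ : ℂ → ℝ := fun v => (R - dist v z) ^ (2 / p) * ‖f v‖
  have hφ : Continuous φ :=
    ((continuous_const.sub (continuous_id.dist continuous_const)).rpow_const
      fun _ => Or.inr (by positivity)).mul hf.continuous.norm
  obtain ⟨w₀, hw₀, hmax⟩ :=
    (isCompact_closedBall z R).exists_isMaxOn (nonempty_closedBall.2 hR.le) hφ.continuousOn
  have hΦ : ∀ v ∈ closedBall z R, φ v ≤ φ w₀ := fun v hv => hmax hv
  have hφ₀ : 0 ≤ φ w₀ :=
    mul_nonneg (rpow_nonneg (sub_nonneg.2 (mem_closedBall.1 hw₀)) _) (norm_nonneg _)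
  have hΦp : φ w₀ ^ p ≤ 2 ^ (2 / p) / π * ∫ w in closedBall z R, ‖f w‖ ^ p :=
    rpow_le_of_le_mul_rpow_one_sub hφ₀ (by positivity) hp <|
      (sub_dist_rpow_mul_norm_le hf hp hp1 hΦ hw₀).trans_eq (by ring)
  have hφz : φ z ^ p = R ^ 2 * ‖f z‖ ^ p := by
    simp only [φ, dist_self, sub_zero]
    rw [mul_rpow (by positivity) (norm_nonneg _), ← rpow_mul hR.le, div_mul_cancel₀ _ hp.ne',
      rpow_two]
  have hφz₀ : 0 ≤ φ z := by simp only [φ, dist_self, sub_zero]; positivity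
  have hz := hφz ▸ (rpow_le_rpow hφz₀ (hΦ z (mem_closedBall_self hR.le)) hp.le).trans hΦp
  rw [← le_div_iff₀' (pow_pos hR 2)] at hz
  exact hz.trans_eq (by ring)

theorem norm_rpow_le_of_one_le (hf : Differentiable ℂ f) (hp : 1 ≤ p) (z : ℂ) {R : ℝ}
    (hR : 0 < R) : ‖f z‖ ^ p ≤ (π * R ^ 2)⁻¹ * ∫ w in closedBall z R, ‖f w‖ ^ p := by
  have hvol := volume_real_closedBall z hR.le
  have hmean : ‖f z‖ ≤ ⨍ w in closedBall z R, ‖f w‖ := by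
    rw [setAverage_eq, hvol, smul_eq_mul]
    exact norm_le_setIntegral_closedBall hf z hR
  have hJensen : (⨍ w in closedBall z R, ‖f w‖) ^ p ≤ ⨍ w in closedBall z R, ‖f w‖ ^ p :=
    (convexOn_rpow hp).map_set_average_le (μ := volume)
      (continuousOn_id.rpow_const fun _ _ => Or.inr (by linarith)) isClosed_Ici
      (measure_closedBall_pos volume z hR).ne' measure_closedBall_lt_top.ne
      (Eventually.of_forall fun w => norm_nonneg (f w))
      (by simpa using integrableOn_closedBall_norm_rpow hf.continuous zero_le_one z R)
      (integrableOn_closedBall_norm_rpow hf.continuous (by linarith) z R)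
  calc ‖f z‖ ^ p ≤ (⨍ w in closedBall z R, ‖f w‖) ^ p :=
        rpow_le_rpow (norm_nonneg _) hmean (by linarith)
    _ ≤ ⨍ w in closedBall z R, ‖f w‖ ^ p := hJensen
    _ = (π * R ^ 2)⁻¹ * ∫ w in closedBall z R, ‖f w‖ ^ p := by
        rw [setAverage_eq, hvol, smul_eq_mul]

theorem norm_rpow_le_setIntegral_closedBall (hf : Differentiable ℂ f) (hp : 0 < p) (z : ℂ)
    {R : ℝ} (hR : 0 < R) :
    ‖f z‖ ^ p ≤ 2 ^ (2 / p) / (π * R ^ 2) * ∫ w in closedBall z R, ‖f w‖ ^ p := by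
  rcases le_total p 1 with hp1 | hp1
  · exact norm_rpow_le_of_le_one hf hp hp1 z hR
  · refine (norm_rpow_le_of_one_le hf hp1 z hR).trans ?_
    rw [div_eq_mul_inv]
    exact mul_le_mul_of_nonneg_right
      (le_mul_of_one_le_left (by positivity) (one_le_rpow one_le_two (by positivity)))
      (by positivity)

theorem norm_deriv_rpow_le (hf : Differentiable ℂ f) (hp : 0 < p) (z : ℂ) {R : ℝ} (hR : 0 < R) :
    ‖deriv f z‖ ^ p ≤
      (2 / R) ^ p * (2 ^ (2 / p) / (π * (R / 2) ^ 2)) * ∫ w in closedBall z R, ‖f w‖ ^ p := by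
  obtain ⟨w₀, hw₀, hmax⟩ := (isCompact_closedBall z (R / 2)).exists_isMaxOn
    (nonempty_closedBall.2 (by positivity)) hf.continuous.norm.continuousOn
  have hcauchy : ‖deriv f z‖ ≤ 2 / R * ‖f w₀‖ := by
    refine (norm_deriv_le_of_forall_mem_sphere_norm_le (half_pos hR) hf.diffContOnCl
      fun x hx => hmax (sphere_subset_closedBall hx)).trans_eq ?_
    field_simp
  have hsub : closedBall w₀ (R / 2) ⊆ closedBall z R :=
    closedBall_subset_closedBall' (by rw [mem_closedBall] at hw₀; linarith)
  have hmono : ∫ w in closedBall w₀ (R / 2), ‖f w‖ ^ p ≤ ∫ w in closedBall z R, ‖f w‖ ^ p :=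
    setIntegral_mono_set (integrableOn_closedBall_norm_rpow hf.continuous hp.le _ _)
      (Eventually.of_forall fun _ => by positivity) hsub.eventuallyLE
  calc ‖deriv f z‖ ^ p ≤ (2 / R * ‖f w₀‖) ^ p := rpow_le_rpow (norm_nonneg _) hcauchy hp.le
    _ = (2 / R) ^ p * ‖f w₀‖ ^ p := mul_rpow (by positivity) (norm_nonneg _)
    _ ≤ (2 / R) ^ p * (2 ^ (2 / p) / (π * (R / 2) ^ 2) *
          ∫ w in closedBall w₀ (R / 2), ‖f w‖ ^ p) := by
        gcongr
        exact norm_rpow_le_setIntegral_closedBall hf hp w₀ (half_pos hR)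
    _ ≤ (2 / R) ^ p * (2 ^ (2 / p) / (π * (R / 2) ^ 2) * ∫ w in closedBall z R, ‖f w‖ ^ p) := by
        gcongr
    _ = _ := by ring

theorem circleAverage_norm_deriv_rpow_le (hf : Differentiable ℂ f) (hp : 0 < p) (r : ℝ) {δ : ℝ}
    (hδ : 0 < δ) :
    circleAverage (fun z => ‖deriv f z‖ ^ p) 0 r ≤
      (2 / δ) ^ p * (2 ^ (2 / p) / (π * (δ / 2) ^ 2)) *
        ∫ ζ in closedBall 0 δ, circleAverage (fun z => ‖f z‖ ^ p) 0 ‖(r : ℂ) + ζ‖ := by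
  have hfp : Continuous fun z => ‖f z‖ ^ p := hf.continuous.norm.rpow_const fun _ => Or.inr hp.le
  have hf'p : Continuous fun z => ‖deriv f z‖ ^ p :=
    (hf.contDiff (n := 1)).continuous_deriv le_rfl |>.norm.rpow_const fun _ => Or.inr hp.le
  rw [← circleAverage_setIntegral_closedBall hfp r δ, ← smul_eq_mul, ← circleAverage_smul]
  exact circleAverage_mono hf'p.continuousOn.circleIntegrable'
    ((continuous_const.mul
      (continuous_setIntegral_closedBall hfp δ)).continuousOn.circleIntegrable')
    fun z _ => norm_deriv_rpow_le hf hp z hδ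

end Holomorphic

theorem Mp_eq_circleAverage (p : ℝ) (g : ℂ → ℂ) (r : ℝ) :
    Mp p g r = circleAverage (fun z => ‖g z‖ ^ p) 0 r ^ (1 / p) := by
  simp only [Mp, circleAverage_def, circleMap_zero, smul_eq_mul, one_div]

theorem circleAverage_norm_rpow_nonneg (p : ℝ) (g : ℂ → ℂ) (r : ℝ) :
    0 ≤ circleAverage (fun z => ‖g z‖ ^ p) 0 r :=
  circleAverage_nonneg_of_nonneg fun _ _ => by positivity

theorem Mp_nonneg (p : ℝ) (g : ℂ → ℂ) (r : ℝ) : 0 ≤ Mp p g r := by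
  rw [Mp_eq_circleAverage]
  exact rpow_nonneg (circleAverage_norm_rpow_nonneg p g r) _

theorem Mp_deriv_le {p : ℝ} (hp : 0 < p) {f : ℂ → ℂ} (hf : Differentiable ℂ f) {r δ B : ℝ}
    (hr : 0 ≤ r) (hδ : 0 < δ) (hB : ∀ t ∈ Icc 0 (r + δ), Mp p f t ≤ B) :
    Mp p (deriv f) r ≤ (4 * 2 ^ p * 2 ^ (2 / p)) ^ (1 / p) * (B / δ) := by
  have hB₀ : 0 ≤ B := (Mp_nonneg p f 0).trans (hB 0 ⟨le_rfl, by linarith⟩)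
  have hmean : ∀ ζ ∈ closedBall (0 : ℂ) δ,
      circleAverage (fun z => ‖f z‖ ^ p) 0 ‖(r : ℂ) + ζ‖ ≤ B ^ p := by
    intro ζ hζ
    have ht : ‖(r : ℂ) + ζ‖ ∈ Icc 0 (r + δ) := by
      refine ⟨norm_nonneg _, (norm_add_le _ _).trans ?_⟩
      rw [norm_real, Real.norm_of_nonneg hr]
      linarith [mem_closedBall_zero_iff.1 hζ]
    rw [← rpow_inv_rpow (circleAverage_norm_rpow_nonneg p f _) hp.ne', ← one_div,
      ← Mp_eq_circleAverage]
    exact rpow_le_rpow (Mp_nonneg p f _) (hB _ ht) hp.le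
  have hint : ∫ ζ in closedBall 0 δ, circleAverage (fun z => ‖f z‖ ^ p) 0 ‖(r : ℂ) + ζ‖ ≤
      π * δ ^ 2 * B ^ p := by
    rw [← volume_real_closedBall 0 hδ.le, ← smul_eq_mul, ← setIntegral_const]
    exact integral_mono_of_nonneg
      (Eventually.of_forall fun _ => circleAverage_norm_rpow_nonneg p f _)
      (integrableOn_const measure_closedBall_lt_top.ne)
      ((ae_restrict_iff' measurableSet_closedBall).2 (Eventually.of_forall hmean))
  have hconst : (2 / δ) ^ p * (2 ^ (2 / p) / (π * (δ / 2) ^ 2)) * (π * δ ^ 2 * B ^ p) =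
      4 * 2 ^ p * 2 ^ (2 / p) * (B / δ) ^ p := by
    have : 0 < δ ^ p := by positivity
    rw [div_rpow zero_le_two hδ.le, div_rpow hB₀ hδ.le]
    field_simp
    ring
  have key : circleAverage (fun z => ‖deriv f z‖ ^ p) 0 r ≤
      4 * 2 ^ p * 2 ^ (2 / p) * (B / δ) ^ p :=
    ((circleAverage_norm_deriv_rpow_le hf hp r hδ).trans (by gcongr)).trans_eq hconst
  rw [Mp_eq_circleAverage, ← rpow_rpow_inv (div_nonneg hB₀ hδ.le) hp.ne', ← one_div,
    ← mul_rpow (by positivity) (by positivity)]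
  exact rpow_le_rpow (circleAverage_norm_rpow_nonneg p _ r) key (by positivity)

end HardyWeighted

theorem stmt_12_general (w u : ℝ → ℝ) (hw : IsWeight ⊤ w)
    (C : ℝ)
    (hcomp : ∀ r : ℝ, 0 ≤ r → w (1 + r) ≤ C * u r) :
    ∀ p : ℝ, 0 < p →
      ∃ K : ℝ, ∀ f : ℂ → ℂ, Differentiable ℂ f →
        (∀ r, 0 ≤ r → Mp p f r ≤ w r) →
        ∀ r, 0 ≤ r → Mp p (deriv f) r ≤ K * u r := by
  intro p hp
  refine ⟨(4 * 2 ^ p * 2 ^ (2 / p)) ^ (1 / p) * C, fun f hf hMp r hr => ?_⟩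
  calc Mp p (deriv f) r ≤ (4 * 2 ^ p * 2 ^ (2 / p)) ^ (1 / p) * (w (1 + r) / 1) :=
        HardyWeighted.Mp_deriv_le hp hf hr one_pos fun t ht =>
          (hMp t ht.1).trans (hw.mono t (1 + r) ht.1 (by linarith [ht.2]) ENNReal.ofReal_lt_top)
    _ ≤ (4 * 2 ^ p * 2 ^ (2 / p)) ^ (1 / p) * (C * u r) := by
        rw [div_one]; gcongr; exact hcomp r hr
    _ = (4 * 2 ^ p * 2 ^ (2 / p)) ^ (1 / p) * C * u r := by ring

/-- if `w(1+r) ≤ C u(r)` on `[0,∞)`, then differentiation is bounded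
from `H_w^p(ℂ)` to `H_u^p(ℂ)` for every `0 < p < ∞`. -/
theorem stmt_12 (w u : ℝ → ℝ) (hw : IsWeight ⊤ w) (hu : IsWeight ⊤ u)
    (hgw : (fun r : ℝ => Real.log r) =o[atTop] (fun r => Real.log (w r)))
    (hgu : (fun r : ℝ => Real.log r) =o[atTop] (fun r => Real.log (u r)))
    (C : ℝ) (hCpos : 0 < C)
    (hcomp : ∀ r : ℝ, 0 ≤ r → w (1 + r) ≤ C * u r) :
    ∀ p : ℝ, 0 < p →
      ∃ K : ℝ, ∀ f : ℂ → ℂ, Differentiable ℂ f →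
        (∀ r, 0 ≤ r → Mp p f r ≤ w r) →
        ∀ r, 0 ≤ r → Mp p (deriv f) r ≤ K * u r :=
  stmt_12_general w u hw C hcomp
end
end
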